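/- For smooth functions f₁,…,f_{n+1}, the (n+1)-ary Koszul bracket of their differentials is the differential of the higher Poisson bracket: b_{n+1}(df₁,…,df_{n+1}) = d{f₁,…,f_{n+1}}, where {f₁,…,f_{n+1}} = R(df₁,…,df_{n+1}). -/

import Mathlib

open scoped BigOperators

noncomputable section

/-- Points of the local chart. -/
abbrev Pt (d : ℕ) := Fin d → ℝ

/-- Partial derivative `∂_i f` at `x`. -/
def pd {d : ℕ} (i : Fin d) (f : Pt d → ℝ) (x : Pt d) : ℝ :=
  fderiv ℝ f x (Pi.single i 1)

/-- Lie derivative of a 1-form `e` along a vector field `X`: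
`(L_X e)_μ = X^ν ∂_ν e_μ + e_ν ∂_μ X^ν`. -/
def lieD {d : ℕ} (X e : Pt d → Fin d → ℝ) : Pt d → Fin d → ℝ :=
  fun x μ => ∑ ν, (X x ν * pd ν (fun y => e y μ) x + e x ν * pd μ (fun y => X y ν) x)

/-- Action of a vector field on a function, `X f = X^ν ∂_ν f`. -/
def act {d : ℕ} (X : Pt d → Fin d → ℝ) (f : Pt d → ℝ) (x : Pt d) : ℝ :=
  ∑ ν, X x ν * pd ν f x

/-- The vector field `Π(e)`, `(Π(e))^ν = Π^{μν} e_μ`. -/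
def sharp {d : ℕ} (P : Pt d → Fin d → Fin d → ℝ) (e : Pt d → Fin d → ℝ) :
    Pt d → Fin d → ℝ :=
  fun x ν => ∑ μ, P x μ ν * e x μ

/-- Full contraction `Π(e,e') = Π^{μν} e_μ e'_ν`. -/
def pairP {d : ℕ} (P : Pt d → Fin d → Fin d → ℝ) (e e' : Pt d → Fin d → ℝ) :
    Pt d → ℝ :=
  fun x => ∑ μ, ∑ ν, P x μ ν * e x μ * e' x ν

/-- The Koszul bracket `b₂(e,e') = L_{Π(e)}e' − L_{Π(e')}e − d(Π(e,e'))`. -/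
def kb {d : ℕ} (P : Pt d → Fin d → Fin d → ℝ) (e e' : Pt d → Fin d → ℝ) :
    Pt d → Fin d → ℝ :=
  fun x μ => lieD (sharp P e) e' x μ - lieD (sharp P e') e x μ - pd μ (pairP P e e') x

/-- Interior product with the de Rham differential: `(ι_X de)_μ = X^ν(∂_ν e_μ − ∂_μ e_ν)`. -/
def iotaD {d : ℕ} (X e : Pt d → Fin d → ℝ) : Pt d → Fin d → ℝ :=
  fun x μ => ∑ ν, X x ν * (pd ν (fun y => e y μ) x - pd μ (fun y => e y ν) x)

/-- The de Rham differential of a function, as a 1-form. -/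
def dF {d : ℕ} (f : Pt d → ℝ) : Pt d → Fin d → ℝ := fun x μ => pd μ f x

/-- The anchor map of the `(n+1)`-vector `R` on decomposable `n`-forms:
`R(e₁∧…∧eₙ)^ν = R^{μ₁…μₙν} e₁_{μ₁}…eₙ_{μₙ}`. -/
def Rc {d n : ℕ} (R : Pt d → (Fin (n+1) → Fin d) → ℝ)
    (f : Fin n → (Pt d → Fin d → ℝ)) : Pt d → Fin d → ℝ :=
  fun x ν => ∑ μ : Fin n → Fin d, R x (Fin.snoc μ ν) * ∏ i, f i x (μ i)

/-- Full contraction `R(e^{(1)},…,e^{(n+1)}) = R^{μ₁…μ_{n+1}} e^{(1)}_{μ₁}…e^{(n+1)}_{μ_{n+1}}`. -/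
def Rfull {d n : ℕ} (R : Pt d → (Fin (n+1) → Fin d) → ℝ)
    (e : Fin (n+1) → (Pt d → Fin d → ℝ)) : Pt d → ℝ :=
  fun x => ∑ μ : Fin (n+1) → Fin d, R x μ * ∏ i, e i x (μ i)

/-- Total antisymmetry of the component functions of a multivector field. -/
def Antisym {d m : ℕ} (R : Pt d → (Fin m → Fin d) → ℝ) : Prop :=
  ∀ (x : Pt d) (σ : Equiv.Perm (Fin m)) (μ : Fin m → Fin d),
    R x (μ ∘ σ) = ((Equiv.Perm.sign σ : ℤ) : ℝ) * R x μ

/-- Smoothness of (the components of) a 1-form. -/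
def SmForm {d : ℕ} (e : Pt d → Fin d → ℝ) : Prop := ∀ μ, ContDiff ℝ (⊤ : ℕ∞) (fun x => e x μ)

/-- Smoothness of the components of a multivector field. -/
def SmMV {d m : ℕ} (R : Pt d → (Fin m → Fin d) → ℝ) : Prop :=
  ∀ μ, ContDiff ℝ (⊤ : ℕ∞) (fun x => R x μ)

/-- The `(n+1)`-ary Koszul bracket of the `(n+1)`-vector `R` (Lie-derivative form),
`b_{n+1}(e^{(1)},…,e^{(n+1)}) = Σ_r (−1)^{n−r+1} L_{R(ê[r])} e^{(r)} − d(R(e^{(1)},…,e^{(n+1)}))`,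
with the normalization of the exact term making the bracket consistent for all `n`
(it reduces to the usual Koszul bracket for `n = 1`). -/
def bKos {d n : ℕ} (R : Pt d → (Fin (n+1) → Fin d) → ℝ)
    (e : Fin (n+1) → (Pt d → Fin d → ℝ)) : Pt d → Fin d → ℝ :=
  fun x μ =>
    (∑ r : Fin (n+1), (-1 : ℝ) ^ (n + r.val) * lieD (Rc R (e ∘ r.succAbove)) (e r) x μ)
      - (n : ℝ) * pd μ (Rfull R e) x

-- ## helper lemmas

lemma contDiff_pd {d : ℕ} (i : Fin d) {f : Pt d → ℝ} (hf : ContDiff ℝ (⊤ : ℕ∞) f) :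
    ContDiff ℝ (⊤ : ℕ∞) (fun x => pd i f x) :=
  (hf.fderiv_right (by simp)).clm_apply contDiff_const

lemma pd_sum {d : ℕ} {ι : Type*} (s : Finset ι) (g : ι → Pt d → ℝ) {x : Pt d} (μ : Fin d)
    (h : ∀ j ∈ s, DifferentiableAt ℝ (g j) x) :
    pd μ (fun y => ∑ j ∈ s, g j y) x = ∑ j ∈ s, pd μ (g j) x := by
  unfold pd
  rw [fderiv_fun_sum h]
  simp

lemma pd_mul {d : ℕ} {f g : Pt d → ℝ} {x : Pt d} (μ : Fin d)
    (hf : DifferentiableAt ℝ f x) (hg : DifferentiableAt ℝ g x) :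
    pd μ (fun y => f y * g y) x = pd μ f x * g x + f x * pd μ g x := by
  unfold pd
  rw [fderiv_fun_mul hf hg]
  simp only [ContinuousLinearMap.add_apply, ContinuousLinearMap.smul_apply, smul_eq_mul]
  ring

lemma pd_const_mul {d : ℕ} {g : Pt d → ℝ} {x : Pt d} (μ : Fin d) (c : ℝ)
    (hg : DifferentiableAt ℝ g x) :
    pd μ (fun y => c * g y) x = c * pd μ g x := by
  unfold pd
  rw [fderiv_const_mul hg]
  simp

lemma pd_comm {d : ℕ} {f : Pt d → ℝ} (hf : ContDiff ℝ (⊤ : ℕ∞) f) (x : Pt d) (v w : Fin d) :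
    pd v (fun y => pd w f y) x = pd w (fun y => pd v f y) x := by
  have h2 : IsSymmSndFDerivAt ℝ f x := hf.contDiffAt.isSymmSndFDerivAt (by rw [minSmoothness_of_isRCLikeNormedField]; exact WithTop.coe_le_coe.mpr le_top)
  have hd : DifferentiableAt ℝ (fderiv ℝ f) x :=
    ((hf.fderiv_right (m := (⊤ : ℕ∞)) (by simp)).differentiable (by simp)).differentiableAt
  unfold pd
  rw [fderiv_clm_apply hd (differentiableAt_const _),
    fderiv_clm_apply hd (differentiableAt_const _)]
  simp [h2 (Pi.single v 1) (Pi.single w 1)]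

/-- Cartan-style: Lie derivative of an exact form along a smooth field is exact. -/
lemma lieD_exact {d : ℕ} (X : Pt d → Fin d → ℝ) (f : Pt d → ℝ)
    (hX : ∀ ν, ContDiff ℝ (⊤ : ℕ∞) (fun x => X x ν)) (hf : ContDiff ℝ (⊤ : ℕ∞) f)
    (x : Pt d) (μ : Fin d) :
    lieD X (dF f) x μ = pd μ (act X f) x := by
  have hdiff : ∀ j ∈ (Finset.univ : Finset (Fin d)),
      DifferentiableAt ℝ (fun y => X y j * pd j f y) x := by
    intro j _
    exact (((hX j).mul (contDiff_pd j hf)).differentiable (by simp)).differentiableAt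
  unfold act
  rw [pd_sum Finset.univ (fun j y => X y j * pd j f y) μ hdiff]
  unfold lieD dF
  refine Finset.sum_congr rfl fun ν _ => ?_
  rw [pd_mul μ (((hX ν).differentiable (by simp)).differentiableAt)
      (((contDiff_pd ν hf).differentiable (by simp)).differentiableAt),
    pd_comm hf x ν μ]
  ring

/-- The permutation sending `r ↦ last` and `r.succAbove i ↦ castSucc i`. -/
def insPerm {n : ℕ} (r : Fin (n+1)) : Equiv.Perm (Fin (n+1)) :=
  Fin.revPerm.trans ((Fin.cycleRange r.rev).trans Fin.revPerm)

lemma insPerm_self {n : ℕ} (r : Fin (n+1)) : insPerm r r = Fin.last n := by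
  simp [insPerm, Fin.cycleRange_self]

lemma insPerm_succAbove {n : ℕ} (r : Fin (n+1)) (i : Fin n) :
    insPerm r (r.succAbove i) = i.castSucc := by
  simp [insPerm, Fin.rev_succAbove, Fin.cycleRange_succAbove, Fin.rev_succ]

lemma sign_insPerm {n : ℕ} (r : Fin (n+1)) :
    ((Equiv.Perm.sign (insPerm r) : ℤ) : ℝ) = (-1 : ℝ) ^ (n - r.val) := by
  have h : insPerm r = (Fin.revPerm * Fin.cycleRange r.rev) * Fin.revPerm := rfl
  have hval : (r.rev : ℕ) = n - r.val := by rw [Fin.val_rev]; omega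
  have hu : ((Equiv.Perm.sign (insPerm r) : ℤ)) = (-1 : ℤ) ^ (n - r.val) := by
    rw [h, map_mul, map_mul, Fin.sign_cycleRange, hval]
    rcases Int.units_eq_one_or (Equiv.Perm.sign (Fin.revPerm : Equiv.Perm (Fin (n+1)))) with
      h1 | h1 <;> rw [h1] <;> push_cast <;> ring
  rw [hu]
  push_cast
  ring

/-- The key contraction identity. -/
lemma act_contract {d n : ℕ} (R : Pt d → (Fin (n+1) → Fin d) → ℝ) (hR : Antisym R)
    (F : Fin (n+1) → (Pt d → ℝ)) (r : Fin (n+1)) (x : Pt d) :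
    act (Rc R ((fun i => dF (F i)) ∘ r.succAbove)) (F r) x
      = (-1 : ℝ) ^ (n - r.val) * Rfull R (fun i => dF (F i)) x := by
  classical
  -- expand lhs into a sum over pairs
  have lhs_eq : act (Rc R ((fun i => dF (F i)) ∘ r.succAbove)) (F r) x
      = ∑ p : Fin d × (Fin n → Fin d),
          R x (Fin.snoc p.2 p.1) *
            (∏ i, pd (p.2 i) (F (r.succAbove i)) x) * pd p.1 (F r) x := by
    rw [Fintype.sum_prod_type]
    unfold act Rc dF
    refine Finset.sum_congr rfl fun ν _ => ?_
    rw [Finset.sum_mul]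
    simp [Function.comp]
  rw [lhs_eq]
  -- the reindexing equivalence
  let e : (Fin d × (Fin n → Fin d)) ≃ (Fin (n+1) → Fin d) :=
    (Fin.snocEquiv (fun _ => Fin d)).trans
      (Equiv.arrowCongr (insPerm r).symm (Equiv.refl (Fin d)))
  have he : ∀ p : Fin d × (Fin n → Fin d), ∀ j,
      e p j = (Fin.snoc p.2 p.1 : Fin (n+1) → Fin d) (insPerm r j) := by
    intro p j; rfl
  have key : ∀ p : Fin d × (Fin n → Fin d),
      R x (Fin.snoc p.2 p.1) * (∏ i, pd (p.2 i) (F (r.succAbove i)) x) * pd p.1 (F r) x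
        = (-1 : ℝ) ^ (n - r.val) * (R x (e p) * ∏ i, pd (e p i) (F i) x) := by
    intro p
    have h1 : (Fin.snoc p.2 p.1 : Fin (n+1) → Fin d) = (e p) ∘ ⇑(insPerm r).symm := by
      funext j
      simp only [Function.comp_apply, he, Equiv.apply_symm_apply]
    have h2 : R x (Fin.snoc p.2 p.1) = ((Equiv.Perm.sign (insPerm r).symm : ℤ) : ℝ) * R x (e p) := by
      rw [h1]; exact hR x (insPerm r).symm (e p)
    have h3 : ((Equiv.Perm.sign (insPerm r).symm : ℤ) : ℝ) = (-1 : ℝ) ^ (n - r.val) := by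
      rw [Equiv.Perm.sign_symm]; exact sign_insPerm r
    have h4 : (∏ i, pd (e p i) (F i) x)
        = pd (e p r) (F r) x * ∏ i, pd (e p (r.succAbove i)) (F (r.succAbove i)) x :=
      Fin.prod_univ_succAbove (fun j => pd (e p j) (F j) x) r
    have h5 : e p r = p.1 := by rw [he, insPerm_self, Fin.snoc_last]
    have h6 : ∀ i, e p (r.succAbove i) = p.2 i := by
      intro i; rw [he, insPerm_succAbove, Fin.snoc_castSucc]
    rw [h2, h3, h4, h5]
    simp only [h6]
    ring
  rw [Finset.sum_congr rfl (fun p _ => key p), ← Finset.mul_sum]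
  congr 1
  unfold Rfull dF
  exact Fintype.sum_equiv e _ _ (fun p => rfl)

/-- for smooth functions `f₁,…,f_{n+1}` the `(n+1)`-ary Koszul bracket of
their differentials is the differential of the higher Poisson bracket
`{f₁,…,f_{n+1}} = R(df₁,…,df_{n+1})`, i.e. `b_{n+1}(df₁,…,df_{n+1}) = d{f₁,…,f_{n+1}}`. -/
theorem higher_koszul_exact {d n : ℕ} (hn : 1 ≤ n)
    (R : Pt d → (Fin (n+1) → Fin d) → ℝ)
    (hR : Antisym R) (hRsm : SmMV R)
    (F : Fin (n+1) → (Pt d → ℝ)) (hF : ∀ i, ContDiff ℝ (⊤ : ℕ∞) (F i)) :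
    ∀ (x : Pt d) (μ : Fin d),
      bKos R (fun i => dF (F i)) x μ = pd μ (Rfull R (fun i => dF (F i))) x := by
  intro x μ
  have hG : ContDiff ℝ (⊤ : ℕ∞) (Rfull R (fun i => dF (F i))) := by
    unfold Rfull dF
    exact ContDiff.sum fun κ _ =>
      (hRsm κ).mul (contDiff_prod fun i _ => contDiff_pd (κ i) (hF i))
  have hXsm : ∀ r : Fin (n+1), ∀ ν,
      ContDiff ℝ (⊤ : ℕ∞) (fun x => Rc R ((fun i => dF (F i)) ∘ r.succAbove) x ν) := by
    intro r ν
    unfold Rc dF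
    exact ContDiff.sum fun κ _ =>
      (hRsm _).mul (contDiff_prod fun i _ => contDiff_pd (κ i) (hF _))
  have step : ∀ r : Fin (n+1),
      lieD (Rc R ((fun i => dF (F i)) ∘ r.succAbove)) (dF (F r)) x μ
        = (-1 : ℝ) ^ (n - r.val) * pd μ (Rfull R (fun i => dF (F i))) x := by
    intro r
    rw [lieD_exact _ _ (hXsm r) (hF r) x μ]
    have : act (Rc R ((fun i => dF (F i)) ∘ r.succAbove)) (F r)
        = fun y => (-1 : ℝ) ^ (n - r.val) * Rfull R (fun i => dF (F i)) y := by
      funext y; exact act_contract R hR F r y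
    rw [this, pd_const_mul μ _ ((hG.differentiable (by simp)).differentiableAt)]
  unfold bKos
  rw [Finset.sum_congr rfl (fun r _ => by rw [step r])]
  have hsigns : ∀ r : Fin (n+1),
      (-1 : ℝ) ^ (n + r.val) * ((-1 : ℝ) ^ (n - r.val)
        * pd μ (Rfull R (fun i => dF (F i))) x)
      = pd μ (Rfull R (fun i => dF (F i))) x := by
    intro r
    have hr : r.val ≤ n := Nat.lt_succ_iff.mp r.isLt
    rw [← mul_assoc, ← pow_add]
    have : n + r.val + (n - r.val) = 2 * n := by omega
    rw [this, pow_mul]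
    norm_num
  rw [Finset.sum_congr rfl (fun r _ => hsigns r)]
  rw [Finset.sum_const, Finset.card_univ, Fintype.card_fin]
  push_cast
  ring
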